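/- A finite graph G is isomorphic to a Cayley graph if and only if Aut(G) contains a transitive subgroup A such that for some (equivalently, every) vertex u, the stabilizer A_u is a normal subgroup of A. -/

import Mathlib

/-- The Cayley graph of a group `A` with respect to a Cayley set `S`
(a subset not containing the identity and closed under inverses):
`α` is adjacent to `β` iff `α⁻¹ * β ∈ S`. -/
def cayleyGraph {A : Type} [Group A] (S : Set A) (h1 : (1 : A) ∉ S)
    (h2 : ∀ s ∈ S, s⁻¹ ∈ S) : SimpleGraph A where
  Adj α β := α⁻¹ * β ∈ S
  symm := by
    constructor
    intro α β h
    have := h2 _ h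
    simpa [mul_comm] using this
  loopless := by
    constructor
    intro α h
    simp at h
    exact h1 (by simpa using h)

/-- The stabilizer of a vertex `u` in a subgroup `A` of the automorphism group of `G`. -/
def vertexStabilizer {V : Type} {G : SimpleGraph V} (A : Subgroup (G ≃g G)) (u : V) :
    Subgroup A where
  carrier := {α : A | (α : G ≃g G) u = u}
  one_mem' := rfl
  mul_mem' := by
    intro a b ha hb
    simp only [Set.mem_setOf_eq] at *
    show (a : G ≃g G) ((b : G ≃g G) u) = u
    rw [hb, ha]
  inv_mem' := by
    intro a ha
    simp only [Set.mem_setOf_eq] at *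
    show (↑a⁻¹ : G ≃g G) u = u
    conv_lhs => rw [← ha]
    exact (a : G ≃g G).toEquiv.symm_apply_apply u

lemma mem_vertexStabilizer {V : Type} {G : SimpleGraph V} {A : Subgroup (G ≃g G)} {u : V}
    {α : A} : α ∈ vertexStabilizer A u ↔ (α : G ≃g G) u = u := Iff.rfl

/-- If the stabilizer of `u` is normal and `A` is transitive, elements of the stabilizer
fix every vertex. -/
lemma stab_fixes_all {V : Type} {G : SimpleGraph V} {A : Subgroup (G ≃g G)}
    (htrans : ∀ x y : V, ∃ α : A, (α : G ≃g G) x = y) {u : V}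
    (hnorm : (vertexStabilizer A u).Normal) :
    ∀ α : A, α ∈ vertexStabilizer A u → ∀ v, (α : G ≃g G) v = v := by
  intro α hα v
  obtain ⟨β, hβ⟩ := htrans u v
  have h2 : β⁻¹ * α * β ∈ vertexStabilizer A u := by
    have := hnorm.conj_mem α hα β⁻¹
    simpa using this
  have h3 : ((β⁻¹ * α * β : A) : G ≃g G) u = u := h2
  have h4 : (β : G ≃g G)⁻¹ ((α : G ≃g G) ((β : G ≃g G) u)) = u := h3
  rw [hβ] at h4
  have := congrArg (β : G ≃g G) h4
  simpa [hβ] using this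

/-- Under transitivity + normal stabilizer at one point, every stabilizer element (of any
point) fixes everything; in particular every stabilizer is trivial. -/
lemma stab_eq_one {V : Type} {G : SimpleGraph V} {A : Subgroup (G ≃g G)}
    (htrans : ∀ x y : V, ∃ α : A, (α : G ≃g G) x = y) {u : V}
    (hnorm : (vertexStabilizer A u).Normal) :
    ∀ α : A, α ∈ vertexStabilizer A u → α = 1 := by
  intro α hα
  have : (α : G ≃g G) = 1 := RelIso.ext (stab_fixes_all htrans hnorm α hα)
  exact Subtype.ext this

lemma stab_any_fixes_all {V : Type} {G : SimpleGraph V} {A : Subgroup (G ≃g G)}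
    (htrans : ∀ x y : V, ∃ α : A, (α : G ≃g G) x = y) {u : V}
    (hnorm : (vertexStabilizer A u).Normal) :
    ∀ (v : V) (n : A), n ∈ vertexStabilizer A v → ∀ w, (n : G ≃g G) w = w := by
  intro v n hn w
  obtain ⟨β, hβ⟩ := htrans u v
  have hmem : β⁻¹ * n * β ∈ vertexStabilizer A u := by
    show ((β⁻¹ * n * β : A) : G ≃g G) u = u
    show (β : G ≃g G)⁻¹ ((n : G ≃g G) ((β : G ≃g G) u)) = u
    rw [hβ, hn, ← hβ]
    exact (β : G ≃g G).toEquiv.symm_apply_apply u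
  have h1 : β⁻¹ * n * β = 1 := stab_eq_one htrans hnorm _ hmem
  have h2 : n = 1 := by
    have := congrArg (fun x => β * x * β⁻¹) h1
    simpa [mul_assoc] using this
  rw [h2]; rfl

lemma normal_all {V : Type} {G : SimpleGraph V} {A : Subgroup (G ≃g G)}
    (htrans : ∀ x y : V, ∃ α : A, (α : G ≃g G) x = y) {u : V}
    (hnorm : (vertexStabilizer A u).Normal) (v : V) :
    (vertexStabilizer A v).Normal := by
  constructor
  intro n hn g
  have hfix := stab_any_fixes_all htrans hnorm v n hn
  show ((g * n * g⁻¹ : A) : G ≃g G) v = v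
  show (g : G ≃g G) ((n : G ≃g G) ((g : G ≃g G)⁻¹ v)) = v
  rw [hfix]
  exact (g : G ≃g G).toEquiv.apply_symm_apply v


/-- Regular subgroup gives a Cayley graph isomorphism. -/
lemma to_cayley {V : Type} {G : SimpleGraph V} {A : Subgroup (G ≃g G)}
    (htrans : ∀ x y : V, ∃ α : A, (α : G ≃g G) x = y) {u : V}
    (hnorm : (vertexStabilizer A u).Normal) :
    ∃ (B : Type) (_ : Group B) (S : Set B) (h1 : (1 : B) ∉ S) (h2 : ∀ s ∈ S, s⁻¹ ∈ S),
      Nonempty (G ≃g cayleyGraph S h1 h2) := by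
  have key : ∀ α β : A, (α : G ≃g G) u = (β : G ≃g G) u → α = β := by
    intro α β h
    have hmem : β⁻¹ * α ∈ vertexStabilizer A u := by
      show ((β⁻¹ * α : A) : G ≃g G) u = u
      show (β : G ≃g G)⁻¹ ((α : G ≃g G) u) = u
      rw [h]
      exact (β : G ≃g G).toEquiv.symm_apply_apply u
    have := stab_eq_one htrans hnorm _ hmem
    have := congrArg (fun x => β * x) this
    simpa [mul_assoc] using this
  set S : Set A := {a : A | G.Adj u ((a : G ≃g G) u)} with hS
  have h1 : (1 : A) ∉ S := by
    intro h
    exact G.loopless.irrefl u h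
  have h2 : ∀ s ∈ S, s⁻¹ ∈ S := by
    intro a ha
    show G.Adj u (((a⁻¹ : A) : G ≃g G) u)
    have : G.Adj ((a : G ≃g G) u) ((a : G ≃g G) ((a : G ≃g G)⁻¹ u)) ↔
        G.Adj u ((a : G ≃g G)⁻¹ u) := (a : G ≃g G).map_adj_iff
    apply this.mp
    rw [RelIso.apply_inv_self]
    exact ha.symm
  refine ⟨A, inferInstance, S, h1, h2, ⟨?_⟩⟩
  have hφ : ∀ v : V, ((htrans u v).choose : G ≃g G) u = v := fun v => (htrans u v).choose_spec
  refine ⟨⟨fun v => (htrans u v).choose, fun a => (a : G ≃g G) u, fun v => hφ v,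
    fun a => key _ a (hφ _)⟩, ?_⟩
  · intro x y
    show ((htrans u x).choose⁻¹ * (htrans u y).choose) ∈ S ↔ G.Adj x y
    show G.Adj u (((htrans u x).choose : G ≃g G)⁻¹ (((htrans u y).choose : G ≃g G) u)) ↔ _
    rw [hφ y]
    constructor
    · intro h
      have := ((htrans u x).choose : G ≃g G).map_adj_iff.mpr h
      rwa [hφ x, RelIso.apply_inv_self] at this
    · intro h
      have : G.Adj (((htrans u x).choose : G ≃g G) u)
          (((htrans u x).choose : G ≃g G) (((htrans u x).choose : G ≃g G)⁻¹ y)) ↔ _ :=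
        ((htrans u x).choose : G ≃g G).map_adj_iff
      apply this.mp
      rw [hφ x, RelIso.apply_inv_self]
      exact h

/-- A Cayley graph isomorphism gives a transitive subgroup with normal stabilizer. -/
lemma from_cayley {V : Type} [Nonempty V] {G : SimpleGraph V} {A : Type} [Group A]
    {S : Set A} {h1 : (1 : A) ∉ S} {h2 : ∀ s ∈ S, s⁻¹ ∈ S}
    (e : G ≃g cayleyGraph S h1 h2) :
    ∃ B : Subgroup (G ≃g G), (∀ x y : V, ∃ α : B, (α : G ≃g G) x = y) ∧
      ∃ u : V, (vertexStabilizer B u).Normal := by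
  have mk_rel : ∀ a : A, ∀ x y : V,
      (cayleyGraph S h1 h2).Adj (a * e x) (a * e y) ↔ G.Adj x y := by
    intro a x y
    show (a * e x)⁻¹ * (a * e y) ∈ S ↔ _
    rw [mul_inv_rev, mul_assoc, inv_mul_cancel_left]
    exact e.map_adj_iff
  let Φ : A →* (G ≃g G) :=
    { toFun := fun a =>
        { toEquiv := e.toEquiv.trans ((Equiv.mulLeft a).trans e.symm.toEquiv)
          map_rel_iff' := by
            intro x y
            show G.Adj (e.symm (a * e x)) (e.symm (a * e y)) ↔ G.Adj x y
            rw [e.symm.map_adj_iff]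
            exact mk_rel a x y }
      map_one' := by
        apply RelIso.ext
        intro x
        show e.symm (1 * e x) = x
        rw [one_mul]
        exact e.toEquiv.symm_apply_apply x
      map_mul' := by
        intro a b
        apply RelIso.ext
        intro x
        show e.symm (a * b * e x) = e.symm (a * e (e.symm (b * e x)))
        rw [mul_assoc]
        exact congrArg (fun t => e.symm (a * t)) (e.apply_symm_apply _).symm }
  have hΦ : ∀ (a : A) (x : V), Φ a x = e.symm (a * e x) := fun _ _ => rfl
  refine ⟨Φ.range, ?_, Classical.arbitrary V, ?_⟩
  · intro x y
    refine ⟨⟨Φ (e y * (e x)⁻¹), ⟨e y * (e x)⁻¹, rfl⟩⟩, ?_⟩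
    show e.symm (e y * (e x)⁻¹ * e x) = y
    rw [inv_mul_cancel_right]
    exact e.toEquiv.symm_apply_apply y
  · set u := Classical.arbitrary V
    constructor
    intro n hn g
    -- n fixes u; show n = 1
    obtain ⟨a, ha⟩ := n.2
    have hnu : (n : G ≃g G) u = u := hn
    have hau : e.symm (a * e u) = u := by rw [← hΦ, ha]; exact hnu
    have : a * e u = e u := by
      have := congrArg e hau
      rwa [RelIso.apply_symm_apply e _] at this
    have ha1 : a = 1 := by
      have := mul_right_cancel (b := e u) (a := a) (c := 1) (by simpa using this)
      exact this
    have hn1 : (n : G ≃g G) = 1 := by rw [← ha, ha1, map_one]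
    show ((g * n * g⁻¹ : Φ.range) : G ≃g G) u = u
    show (g : G ≃g G) ((n : G ≃g G) ((g : G ≃g G)⁻¹ u)) = u
    rw [hn1]
    show (g : G ≃g G) ((g : G ≃g G)⁻¹ u) = u
    exact RelIso.apply_inv_self _ _

/-- a finite graph `G` is isomorphic to a Cayley graph iff `Aut G` contains
a transitive subgroup `A` such that for some (equivalently, every) vertex `u` the
stabilizer `A_u` is normal in `A`. -/
theorem cayley_iff_normal_stabilizer {V : Type} [Fintype V] [Nonempty V] (G : SimpleGraph V) :
    ((∃ (A : Type) (_ : Group A) (S : Set A) (h1 : (1 : A) ∉ S) (h2 : ∀ s ∈ S, s⁻¹ ∈ S),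
      Nonempty (G ≃g cayleyGraph S h1 h2)) ↔
    ∃ A : Subgroup (G ≃g G), (∀ x y : V, ∃ α : A, (α : G ≃g G) x = y) ∧
      ∃ u : V, (vertexStabilizer A u).Normal) ∧
    ∀ A : Subgroup (G ≃g G), (∀ x y : V, ∃ α : A, (α : G ≃g G) x = y) →
      ((∃ u : V, (vertexStabilizer A u).Normal) ↔
        ∀ u : V, (vertexStabilizer A u).Normal) := by

  constructor
  · constructor
    · rintro ⟨A, _, S, h1, h2, ⟨e⟩⟩
      exact from_cayley e
    · rintro ⟨A, htrans, u, hnorm⟩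
      exact to_cayley htrans hnorm
  · intro A htrans
    constructor
    · rintro ⟨u, hnorm⟩ v
      exact normal_all htrans hnorm v
    · intro h
      exact ⟨Classical.arbitrary V, h _⟩
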